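/- arXiv:2510.00848 — 9 statements merged into one kernel-verified Lean document; each statement's English description precedes it below -/
import Mathlib

section
/- Let (G, T₁) and (G, T₂) be two separated topological abelian group structures on the same abelian group G such that the identity map (G, T₁) → (G, T₂) is continuous. If there exists a basis of neighborhoods of 0 in (G, T₁) consisting of sets that are complete for the uniform structure induced by T₂, then (G, T₁) is complete. -/
open Filter Set Topology

/-- Let `(G, t₁)` and `(G, t₂)` be two separated topological abelian group structures on
the same abelian group `G` such that the identity map `(G, t₁) → (G, t₂)` is continuous.
If there exists a basis of neighborhoods of `0` in `(G, t₁)` consisting of sets that are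
complete for the uniform structure induced by `t₂`, then `(G, t₁)` is complete. -/
theorem complete_of_complete_nhds_basis {G : Type*} [AddCommGroup G]
    (t₁ t₂ : TopologicalSpace G)
    (h₁ : @IsTopologicalAddGroup G t₁ _) (h₂ : @IsTopologicalAddGroup G t₂ _)
    (hsep₁ : @T2Space G t₁) (hsep₂ : @T2Space G t₂)
    (hcont : @Continuous G G t₁ t₂ id)
    {ι : Type*} (p : ι → Prop) (s : ι → Set G)
    (hbasis : (@nhds G t₁ 0).HasBasis p s)
    (hcomplete : ∀ i, p i →
      @IsComplete G (@IsTopologicalAddGroup.rightUniformSpace G _ t₂ h₂) (s i)) :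
    @CompleteSpace G (@IsTopologicalAddGroup.rightUniformSpace G _ t₁ h₁) := by
  set u₁ : UniformSpace G := @IsTopologicalAddGroup.rightUniformSpace G _ t₁ h₁ with hu₁
  set u₂ : UniformSpace G := @IsTopologicalAddGroup.rightUniformSpace G _ t₂ h₂ with hu₂
  have hug₂ : @IsUniformAddGroup G u₂ _ := @isUniformAddGroup_of_addCommGroup G _ t₂ h₂
  -- the uniformities are comaps of the neighborhoods of 0
  have e₁ : @uniformity G u₁ = comap (fun q : G × G => q.2 - q.1) (@nhds G t₁ 0) := by
    simp only [sub_eq_add_neg]; rfl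
  have e₂ : @uniformity G u₂ = comap (fun q : G × G => q.2 - q.1) (@nhds G t₂ 0) := by
    simp only [sub_eq_add_neg]; rfl
  -- the identity is "uniformly continuous" from u₁ to u₂
  have h𝓝 : @nhds G t₁ 0 ≤ @nhds G t₂ 0 := by
    have := @Continuous.tendsto G G t₁ t₂ id hcont 0
    simpa using Filter.tendsto_id'.mp this
  have hU : @uniformity G u₁ ≤ @uniformity G u₂ := by
    rw [e₁, e₂]; exact comap_mono h𝓝
  -- cauchy filters have arbitrarily small sets
  refine @CompleteSpace.mk G u₁ ?_
  intro f hf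
  have hfne : f.NeBot := hf.1
  have hf₂ : @Cauchy G u₂ f := ⟨hf.1, hf.2.trans hU⟩
  have hsmall : ∀ i, p i → ∃ A ∈ f, ∀ x ∈ A, ∀ y ∈ A, y - x ∈ s i := by
    intro i hi
    have hV : {q : G × G | q.2 - q.1 ∈ s i} ∈ @uniformity G u₁ := by
      rw [e₁]
      exact preimage_mem_comap (hbasis.mem_of_mem hi)
    obtain ⟨A, hAf, hAA⟩ := ((@cauchy_iff G u₁ f).mp hf).2 _ hV
    exact ⟨A, hAf, fun x hx y hy => hAA (Set.mk_mem_prod hx hy)⟩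
  -- translates of the basis sets are complete (hence closed) for u₂
  have htrans : ∀ i, p i → ∀ a : G, @IsComplete G u₂ ((fun x => x + a) '' s i) := by
    intro i hi a
    exact (@isComplete_image_iff G G u₂ u₂ (fun x => x + a) (s i)
      (@isUniformEmbedding_translate_add G u₂ _ hug₂ a).isUniformInducing).mpr (hcomplete i hi)
  have ht0 : @T0Space G u₂.toTopologicalSpace := @T1Space.t0Space G t₂ (@T2Space.t1Space G t₂ hsep₂)
  -- get a small set A, contained in a translate of some complete s i₀
  obtain ⟨i₀, hp₀, -⟩ := hbasis.mem_iff.mp (univ_mem : Set.univ ∈ @nhds G t₁ 0)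
  obtain ⟨A, hAf, hA⟩ := hsmall i₀ hp₀
  obtain ⟨a, haA⟩ := Filter.nonempty_of_mem hAf
  have hsub : A ⊆ (fun x => x + a) '' s i₀ := fun x hx =>
    ⟨x - a, hA a haA x hx, sub_add_cancel x a⟩
  have hfle : f ≤ 𝓟 ((fun x => x + a) '' s i₀) :=
    le_principal_iff.mpr (mem_of_superset hAf hsub)
  -- f converges to some x for the topology t₂
  obtain ⟨x, -, hxf⟩ := htrans i₀ hp₀ a f hf₂ hfle
  -- we show f converges to x for t₁ as well
  refine ⟨x, ?_⟩
  have hnhds : @nhds G t₁ x = comap (fun y => y - x) (@nhds G t₁ 0) :=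
    (@nhds_translation_sub G _ t₁ h₁ x).symm
  rw [hnhds, ← Filter.map_le_iff_le_comap]
  intro W hW
  -- W is a t₁-neighborhood of 0; its preimage under y ↦ y - x must be in f
  have hW' : (fun y : G => -y) ⁻¹' W ∈ @nhds G t₁ 0 := by
    have hneg : @Continuous G G t₁ t₁ (fun y => -y) := @continuous_neg G t₁ _ h₁.toContinuousNeg
    have h0 := @Continuous.tendsto G G t₁ t₁ _ hneg 0
    rw [neg_zero] at h0
    exact h0 hW
  obtain ⟨i, hpi, hsi⟩ := hbasis.mem_iff.mp hW'
  obtain ⟨B, hBf, hB⟩ := hsmall i hpi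
  rw [Filter.mem_map]
  refine mem_of_superset hBf ?_
  intro b hb
  -- x lies in the u₂-closure of B, which is contained in the u₂-closed set b + s i
  have hxcl : x ∈ @closure G u₂.toTopologicalSpace B := by
    letI : TopologicalSpace G := u₂.toTopologicalSpace
    rw [mem_closure_iff_clusterPt]
    exact Filter.NeBot.mono hfne (le_inf hxf (le_principal_iff.mpr hBf))
  have hsubB : B ⊆ (fun y => y + b) '' s i := fun z hz =>
    ⟨z - b, hB b hb z hz, sub_add_cancel z b⟩
  have hcl : @IsClosed G u₂.toTopologicalSpace ((fun y => y + b) '' s i) :=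
    @IsComplete.isClosed G u₂ ht0 _ (htrans i hpi b)
  have hx : x ∈ (fun y => y + b) '' s i := by
    letI : TopologicalSpace G := u₂.toTopologicalSpace
    exact hcl.closure_subset ((closure_mono hsubB) hxcl)
  obtain ⟨y, hy, hyx⟩ := hx
  have hyW : -y ∈ W := hsi hy
  have : b - x = -y := by rw [← hyx]; show b - (y + b) = -y; abel
  show b - x ∈ W
  rw [this]; exact hyW
end

section
/- Let G be a non-archimedean topological abelian group and K any subgroup. The canonical morphism G/K → Ĝ/K̂ (where Ĝ is the separated completion of G and K̂ the closure of the image of K in Ĝ) induces an isomorphism between the separated completion of Ĝ/K̂ and the separated completion of G/K. -/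
open UniformSpace Filter Set Topology

/-- Let `G` be a non-archimedean topological abelian group (with its canonical uniform
structure) and `K` any subgroup.  The canonical morphism `G/K → Ĝ/K̂` (where `Ĝ` is the
separated completion of `G` and `K̂` the closure of the image of `K` in `Ĝ`) induces an
isomorphism between the separated completion of `Ĝ/K̂` and the separated completion of
`G/K`. -/
theorem sepCompletion_quotient_iso {G : Type*} [AddCommGroup G] [UniformSpace G]
    [IsUniformAddGroup G] [NonarchimedeanAddGroup G] (K : AddSubgroup G)
    (Khat : AddSubgroup (Completion G))
    (hKhat : Khat = (K.map Completion.toCompl).topologicalClosure)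
    (hle : K ≤ Khat.comap (Completion.toCompl : G →+ Completion G)) :
    letI : UniformSpace (G ⧸ K) := IsTopologicalAddGroup.rightUniformSpace (G ⧸ K)
    letI : UniformSpace (Completion G ⧸ Khat) :=
      IsTopologicalAddGroup.rightUniformSpace (Completion G ⧸ Khat)
    haveI : IsUniformAddGroup (G ⧸ K) := isUniformAddGroup_of_addCommGroup
    haveI : IsUniformAddGroup (Completion G ⧸ Khat) := isUniformAddGroup_of_addCommGroup
    ∃ e : Completion (Completion G ⧸ Khat) ≃+ Completion (G ⧸ K),
      Continuous e ∧ Continuous e.symm ∧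
        ∀ x : G ⧸ K,
          e ((QuotientAddGroup.map K Khat Completion.toCompl hle x :
              Completion G ⧸ Khat) : Completion (Completion G ⧸ Khat)) =
            (x : Completion (G ⧸ K)) := by
  letI : UniformSpace (G ⧸ K) := IsTopologicalAddGroup.rightUniformSpace (G ⧸ K)
  letI : UniformSpace (Completion G ⧸ Khat) :=
    IsTopologicalAddGroup.rightUniformSpace (Completion G ⧸ Khat)
  haveI : IsUniformAddGroup (G ⧸ K) := isUniformAddGroup_of_addCommGroup
  haveI : IsUniformAddGroup (Completion G ⧸ Khat) := isUniformAddGroup_of_addCommGroup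
  set f : G ⧸ K →+ Completion G ⧸ Khat := QuotientAddGroup.map K Khat Completion.toCompl hle
    with hfdef
  have hcomm : ∀ g : G, f ((g : G ⧸ K)) =
      ((Completion.toCompl g : Completion G) : Completion G ⧸ Khat) := fun g => rfl
  have htoCompl : Continuous (Completion.toCompl : G → Completion G) :=
    Completion.continuous_coe G
  have hcompeq : (⇑f) ∘ ((↑) : G → G ⧸ K) =
      ((↑) : Completion G → Completion G ⧸ Khat) ∘ (Completion.toCompl : G → Completion G) :=
    funext fun g => hcomm g
  -- continuity of `f`
  have hfc : Continuous f := by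
    refine (QuotientAddGroup.isQuotientMap_mk K).continuous_iff.mpr ?_
    rw [hcompeq]
    exact QuotientAddGroup.continuous_mk.comp htoCompl
  -- dense range of `f`
  have hfd : DenseRange f := by
    have h1 : DenseRange ((↑) : Completion G → Completion G ⧸ Khat) :=
      QuotientAddGroup.mk_surjective.denseRange
    have h2 : DenseRange (((↑) : Completion G → Completion G ⧸ Khat) ∘
        (Completion.toCompl : G → Completion G)) :=
      h1.comp Completion.denseRange_coe QuotientAddGroup.continuous_mk
    rw [← hcompeq] at h2
    have : Set.range ((⇑f) ∘ ((↑) : G → G ⧸ K)) = Set.range f :=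
      QuotientAddGroup.mk_surjective.range_comp _
    unfold DenseRange at h2 ⊢
    rwa [this] at h2
  -- the key topological fact: `f` pulls back the neighborhood filter of `0`
  have hcomap : (𝓝 (0 : Completion G ⧸ Khat)).comap f = 𝓝 (0 : G ⧸ K) := by
    refine le_antisymm (fun U hU => ?_) ?_
    · -- comap f (𝓝 0) ≤ 𝓝 0
      have hU' : ((↑) : G → G ⧸ K) ⁻¹' U ∈ 𝓝 (0 : G) := by
        have h0 : ((0 : G) : G ⧸ K) = 0 := rfl
        have := (QuotientAddGroup.continuous_mk :
          Continuous (QuotientAddGroup.mk : G → G ⧸ K)).continuousAt (x := (0 : G))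
        rw [ContinuousAt, h0] at this
        exact this hU
      obtain ⟨P, hP⟩ := NonarchimedeanAddGroup.is_nonarchimedean _ hU'
      set Q : AddSubgroup (Completion G) :=
        (((P : AddSubgroup G)).map (Completion.toCompl : G →+ Completion G)).topologicalClosure
        with hQdef
      have hQcoe : (Q : Set (Completion G)) =
          closure ((Completion.toCompl : G → Completion G) '' (P : Set G)) := by
        simp [hQdef, AddSubgroup.topologicalClosure, AddSubgroup.coe_map]
      have hQmem : (Q : Set (Completion G)) ∈ 𝓝 (0 : Completion G) := by
        rw [hQcoe]
        have := Completion.isDenseInducing_coe.closure_image_mem_nhds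
          (P.isOpen.mem_nhds P.zero_mem)
        rw [Completion.coe_zero] at this
        exact this
      have hQopen : IsOpen (Q : Set (Completion G)) := AddSubgroup.isOpen_of_mem_nhds Q hQmem
      set S : AddSubgroup (Completion G) :=
        (K.map (Completion.toCompl : G →+ Completion G)) ⊔ Q with hSdef
      have hSopen : IsOpen (S : Set (Completion G)) := by
        apply AddSubgroup.isOpen_of_mem_nhds
        exact Filter.mem_of_superset (hQopen.mem_nhds Q.zero_mem)
          (by intro x hx; exact AddSubgroup.mem_sup_right hx)
      have hSclosed : IsClosed (S : Set (Completion G)) := S.isClosed_of_isOpen hSopen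
      have hKhatS : Khat ≤ S := by
        rw [hKhat]
        exact AddSubgroup.topologicalClosure_minimal _ le_sup_left hSclosed
      refine Filter.mem_comap.2
        ⟨((↑) : Completion G → Completion G ⧸ Khat) '' (Q : Set (Completion G)), ?_, ?_⟩
      · have h0 : ((0 : Completion G) : Completion G ⧸ Khat) = 0 := rfl
        have hopen : IsOpenMap ((↑) : Completion G → Completion G ⧸ Khat) :=
          QuotientAddGroup.isOpenMap_coe
        have := hopen.image_mem_nhds hQmem
        rwa [h0] at this
      · rintro x hx
        obtain ⟨g, rfl⟩ := QuotientAddGroup.mk_surjective x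
        obtain ⟨q, hq, hq'⟩ := hx
        -- hq' : ↑q = f ↑g = ↑(toCompl g)
        rw [hcomm g] at hq'
        have hmem : -q + Completion.toCompl g ∈ Khat := (QuotientAddGroup.eq.mp hq')
        have hS : Completion.toCompl g ∈ S := by
          have h1 : q ∈ S := AddSubgroup.mem_sup_right hq
          have h2 : -q + Completion.toCompl g ∈ S := hKhatS hmem
          simpa using add_mem h1 h2
        obtain ⟨y, hy, z, hz, hyz⟩ := (AddSubgroup.mem_sup).mp hS
        obtain ⟨k, hk, rfl⟩ := hy
        have hzeq : (Completion.toCompl : G →+ Completion G) (g - k) = z := by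
          rw [map_sub, ← hyz]
          abel
        have hgk : g - k ∈ (P : AddSubgroup G) := by
          have hpre : (Completion.toCompl : G → Completion G) ⁻¹' (Q : Set (Completion G)) =
              (P : Set G) := by
            have hco : (⇑(Completion.toCompl : G →+ Completion G) : G → Completion G)
                = ((↑) : G → Completion G) := rfl
            rw [hQcoe, hco,
              ← Completion.isDenseInducing_coe.toIsInducing.closure_eq_preimage_closure_image]
            exact P.isClosed.closure_eq
          have : g - k ∈ (Completion.toCompl : G → Completion G) ⁻¹' (Q : Set (Completion G)) := by
            simp only [Set.mem_preimage, hzeq]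
            exact hz
          rwa [hpre] at this
        have : ((g : G ⧸ K)) = ((g - k : G) : G ⧸ K) := by
          apply (QuotientAddGroup.eq).mpr
          have h : -g + (g - k) = -k := by abel
          rw [h]
          exact neg_mem hk
        rw [this]
        exact hP hgk
    · -- 𝓝 0 ≤ comap f (𝓝 0)
      have : Filter.Tendsto f (𝓝 0) (𝓝 0) := by
        have := hfc.continuousAt (x := (0 : G ⧸ K))
        rwa [ContinuousAt, map_zero] at this
      exact this.le_comap
  -- `f` is uniform-inducing
  have hui : IsUniformInducing f := by
    constructor
    rw [uniformity_eq_comap_nhds_zero (G ⧸ K), uniformity_eq_comap_nhds_zero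
      (Completion G ⧸ Khat), Filter.comap_comap, ← hcomap, Filter.comap_comap]
    congr 1
    funext p
    exact (map_sub f p.2 p.1).symm
  -- package `Completion (Completion G ⧸ Khat)` as an abstract completion of `G ⧸ K`
  let pkg : AbstractCompletion (G ⧸ K) :=
    { space := Completion (Completion G ⧸ Khat)
      coe := fun x => ((f x : Completion G ⧸ Khat) : Completion (Completion G ⧸ Khat))
      uniformStruct := inferInstance
      complete := inferInstance
      separation := inferInstance
      isUniformInducing := (Completion.isUniformInducing_coe _).comp hui
      dense := Completion.denseRange_coe.comp hfd (Completion.continuous_coe _) }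
  let e₀ : Completion (Completion G ⧸ Khat) ≃ᵤ Completion (G ⧸ K) :=
    pkg.compareEquiv Completion.cPkg
  have hkey : ∀ x : G ⧸ K,
      e₀ ((f x : Completion G ⧸ Khat) : Completion (Completion G ⧸ Khat)) =
        (x : Completion (G ⧸ K)) := fun x => pkg.compare_coe Completion.cPkg x
  have hcont : Continuous e₀ := e₀.continuous
  have hcont' : Continuous e₀.symm := e₀.symm.continuous
  have hadd : ∀ a b : Completion (Completion G ⧸ Khat), e₀ (a + b) = e₀ a + e₀ b := by
    have hd : DenseRange pkg.coe := pkg.dense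
    have h2 : DenseRange (Prod.map pkg.coe pkg.coe) := hd.prodMap hd
    have heq : (fun p : Completion (Completion G ⧸ Khat) × Completion (Completion G ⧸ Khat) =>
        e₀ (p.1 + p.2)) = fun p => e₀ p.1 + e₀ p.2 := by
      refine h2.equalizer (hcont.comp (continuous_fst.add continuous_snd))
        ((hcont.comp continuous_fst).add (hcont.comp continuous_snd)) ?_
      funext p
      obtain ⟨x, y⟩ := p
      show e₀ (pkg.coe x + pkg.coe y) = e₀ (pkg.coe x) + e₀ (pkg.coe y)
      have h1 : pkg.coe x + pkg.coe y = pkg.coe (x + y) := by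
        show ((f x : Completion G ⧸ Khat) : Completion (Completion G ⧸ Khat)) +
            ((f y : Completion G ⧸ Khat) : Completion (Completion G ⧸ Khat)) =
          ((f (x + y) : Completion G ⧸ Khat) : Completion (Completion G ⧸ Khat))
        rw [map_add, Completion.coe_add]
      rw [h1, hkey, hkey, hkey, Completion.coe_add]
    exact fun a b => congrFun heq (a, b)
  refine ⟨{ e₀.toEquiv with map_add' := hadd }, hcont, hcont', hkey⟩
end

section
/- Let R be a topological ring whose additive group is non-archimedean and whose multiplication is separately continuous. Then the multiplication map μ : R × R → R is uniformly continuous if and only if R is linearly topologized (i.e., admits a fundamental system of neighborhoods of 0 consisting of ideals), and this holds if and only if R is bounded. -/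
open Filter

/-- Let `R` be a topological (commutative) ring whose additive group is non-archimedean
and whose multiplication is separately continuous.  Then the multiplication map
`μ : R × R → R` is uniformly continuous (for the canonical uniform structure) if and only
if `R` is linearly topologized (admits a fundamental system of neighborhoods of `0`
consisting of ideals), and this holds if and only if `R` is bounded (for every open
additive subgroup `P` of `R` there is an open additive subgroup `I` with `I·R ⊆ P`). -/
theorem uniformContinuous_mul_iff_linearTopology_iff_bounded {R : Type*} [CommRing R]
    [UniformSpace R] [IsUniformAddGroup R] [NonarchimedeanAddGroup R]
    (hsep : ∀ a : R, Continuous fun x : R => a * x) :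
    ((UniformContinuous fun p : R × R => p.1 * p.2) ↔
        ∀ U ∈ nhds (0 : R), ∃ I : Ideal R, IsOpen (I : Set R) ∧ (I : Set R) ⊆ U) ∧
      ((∀ U ∈ nhds (0 : R), ∃ I : Ideal R, IsOpen (I : Set R) ∧ (I : Set R) ⊆ U) ↔
        ∀ P : OpenAddSubgroup R, ∃ I : OpenAddSubgroup R,
          ∀ a ∈ I, ∀ b : R, a * b ∈ P) := by
  -- (1) uniform continuity implies boundedness
  have hUCtoB : (UniformContinuous fun p : R × R => p.1 * p.2) →
      ∀ P : OpenAddSubgroup R, ∃ I : OpenAddSubgroup R, ∀ a ∈ I, ∀ b : R, a * b ∈ P := by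
    intro h P
    have hP : (P : Set R) ∈ nhds (0 : R) := P.isOpen.mem_nhds P.zero_mem
    have hS : {p : R × R | p.2 - p.1 ∈ P} ∈ uniformity R := by
      rw [uniformity_eq_comap_nhds_zero]
      exact Filter.preimage_mem_comap hP
    have hpre := h hS
    rw [Filter.mem_map, uniformity_prod_eq_comap_prod, Filter.mem_comap] at hpre
    obtain ⟨t, ht, hsub⟩ := hpre
    rw [Filter.mem_prod_iff] at ht
    obtain ⟨t1, ht1, t2, ht2, hts⟩ := ht
    rw [uniformity_eq_comap_nhds_zero, Filter.mem_comap] at ht1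
    obtain ⟨u, hu, h1⟩ := ht1
    obtain ⟨V, hV⟩ := NonarchimedeanAddGroup.is_nonarchimedean u hu
    refine ⟨V, fun a ha b => ?_⟩
    have ht1a : ((0 : R), a) ∈ t1 := h1 (by simpa using hV ha)
    have ht2b : (b, b) ∈ t2 := refl_mem_uniformity ht2
    have : (((0 : R), b), (a, b)) ∈
        (fun p : (R × R) × R × R => ((p.1.1, p.2.1), p.1.2, p.2.2)) ⁻¹' (t1 ×ˢ t2) :=
      ⟨ht1a, ht2b⟩
    have := hsub (hts this)
    simpa using this
  -- (2) boundedness implies linear topology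
  have hBtoL : (∀ P : OpenAddSubgroup R, ∃ I : OpenAddSubgroup R,
        ∀ a ∈ I, ∀ b : R, a * b ∈ P) →
      ∀ U ∈ nhds (0 : R), ∃ I : Ideal R, IsOpen (I : Set R) ∧ (I : Set R) ⊆ U := by
    intro h U hU
    obtain ⟨P, hPU⟩ := NonarchimedeanAddGroup.is_nonarchimedean U hU
    obtain ⟨V, hV⟩ := h P
    refine ⟨Ideal.span (V : Set R), ?_, ?_⟩
    · have hmem : ((Ideal.span (V : Set R) : Ideal R) : Set R) ∈ nhds (0 : R) :=
        Filter.mem_of_superset (V.isOpen.mem_nhds V.zero_mem) Ideal.subset_span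
      have := AddSubgroup.isOpen_of_mem_nhds (Ideal.span (V : Set R)).toAddSubgroup
        (g := (0 : R)) hmem
      exact this
    · intro x hx
      have key : ∀ x ∈ Ideal.span (V : Set R), ∀ r : R, r * x ∈ P := by
        intro x hx
        refine Submodule.span_induction ?_ ?_ ?_ ?_ hx
        · intro y hy r
          rw [mul_comm]
          exact hV y hy r
        · intro r; simpa using P.zero_mem
        · intro y z _ _ hy hz r
          rw [mul_add]
          exact P.add_mem (hy r) (hz r)
        · intro s y _ hy r
          rw [smul_eq_mul, ← mul_assoc]
          exact hy (r * s)
      have := key x hx 1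
      rw [one_mul] at this
      exact hPU this
  -- (3) linear topology implies uniform continuity
  have hLtoUC : (∀ U ∈ nhds (0 : R), ∃ I : Ideal R, IsOpen (I : Set R) ∧ (I : Set R) ⊆ U) →
      UniformContinuous fun p : R × R => p.1 * p.2 := by
    intro h
    rw [UniformContinuous, uniformity_eq_comap_nhds_zero R, Filter.tendsto_comap_iff]
    intro U hU
    rw [Filter.mem_map]
    obtain ⟨I, hIo, hIU⟩ := h U hU
    have hS1 : {p : R × R | p.2 - p.1 ∈ I} ∈ uniformity R := by
      rw [uniformity_eq_comap_nhds_zero]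
      exact Filter.preimage_mem_comap (hIo.mem_nhds I.zero_mem)
    rw [uniformity_prod_eq_comap_prod, Filter.mem_comap]
    refine ⟨{p : R × R | p.2 - p.1 ∈ I} ×ˢ {p : R × R | p.2 - p.1 ∈ I},
      Filter.prod_mem_prod hS1 hS1, ?_⟩
    rintro ⟨⟨a, b⟩, ⟨c, d⟩⟩ ⟨h1, h2⟩
    apply hIU
    show c * d - a * b ∈ (I : Set R)
    have heq : c * d - a * b = c * (d - b) + (c - a) * b := by ring
    rw [heq]
    exact I.add_mem (I.mul_mem_left c h2) (I.mul_mem_right b h1)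
  exact ⟨⟨fun h => hBtoL (hUCtoB h), hLtoUC⟩,
    ⟨fun h => hUCtoB (hLtoUC h), hBtoL⟩⟩
end

section
/- Let R be a linearly topologized ring whose multiplication satisfies: for all open ideals I, J, the closure of IJ is open ('clop'). Then the separated completion R̂ of R is again clop: for open ideals Î, Ĵ of R̂ arising as closures of images of open ideals I, J of R, the closure of Î·Ĵ in R̂ is open. -/
open UniformSpace

/-- Let `R` be a linearly topologized ring which is *clop*: for all open ideals `I, J`,
the closure of `I*J` is open.  Then the separated completion `R̂` of `R` is again clop:
for the open ideals `Î, Ĵ` of `R̂` arising as closures of the images of open ideals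
`I, J` of `R`, the closure of `Î * Ĵ` in `R̂` is open. -/
theorem completion_clop_of_clop {R : Type*} [CommRing R] [UniformSpace R]
    [IsUniformAddGroup R] [IsTopologicalRing R]
    (hlin : ∀ U ∈ nhds (0 : R), ∃ I : Ideal R, IsOpen (I : Set R) ∧ (I : Set R) ⊆ U)
    (hclop : ∀ I J : Ideal R, IsOpen (I : Set R) → IsOpen (J : Set R) →
      IsOpen (closure ((I * J : Ideal R) : Set R))) :
    letI : SMulCommClass (Completion R) (Completion R) (Completion R) :=
      ⟨fun a b c => by simp only [smul_eq_mul, mul_left_comm]⟩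
    letI : ContinuousConstSMul (Completion R) (Completion R) :=
      ⟨fun a => by simpa only [smul_eq_mul] using (continuous_mul_left a)⟩
    letI : IsScalarTower (Completion R) (Completion R) (Completion R) :=
      ⟨fun a b c => by simp only [smul_eq_mul, mul_assoc]⟩
    ∀ I J : Ideal R, IsOpen (I : Set R) → IsOpen (J : Set R) →
      ∀ Ihat Jhat : Ideal (Completion R),
        Ihat = (I.map (Completion.coeRingHom : R →+* Completion R)).topologicalClosure →
        Jhat = (J.map (Completion.coeRingHom : R →+* Completion R)).topologicalClosure →
        IsOpen (closure ((Ihat * Jhat : Ideal (Completion R)) : Set (Completion R))) := by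
  letI : SMulCommClass (Completion R) (Completion R) (Completion R) :=
    ⟨fun a b c => by simp only [smul_eq_mul, mul_left_comm]⟩
  letI : ContinuousConstSMul (Completion R) (Completion R) :=
    ⟨fun a => by simpa only [smul_eq_mul] using (continuous_mul_left a)⟩
  letI : IsScalarTower (Completion R) (Completion R) (Completion R) :=
    ⟨fun a b c => by simp only [smul_eq_mul, mul_assoc]⟩
  intro I J hI hJ Ihat Jhat hIhat hJhat
  -- The key neighborhood of 0 in R: the closure of I*J, which is open by `hclop`.
  have hK : IsOpen (closure ((I * J : Ideal R) : Set R)) := hclop I J hI hJ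
  have hKn : closure ((I * J : Ideal R) : Set R) ∈ nhds (0 : R) :=
    hK.mem_nhds (subset_closure (zero_mem _))
  -- push to the completion
  have h1 : closure ((fun x : R => (x : Completion R)) '' closure ((I * J : Ideal R) : Set R))
      ∈ nhds (0 : Completion R) := by
    have := (Completion.isDenseInducing_coe (α := R)).closure_image_mem_nhds hKn
    rwa [Completion.coe_zero] at this
  -- this set is contained in the closure of Ihat * Jhat
  have hsub : closure ((fun x : R => (x : Completion R)) '' closure ((I * J : Ideal R) : Set R))
      ⊆ closure ((Ihat * Jhat : Ideal (Completion R)) : Set (Completion R)) := by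
    apply closure_minimal _ isClosed_closure
    have himg : (fun x : R => (x : Completion R)) '' closure ((I * J : Ideal R) : Set R)
        ⊆ closure ((fun x : R => (x : Completion R)) '' ((I * J : Ideal R) : Set R)) :=
      image_closure_subset_closure_image (Completion.continuous_coe R)
    have hsub2 : (fun x : R => (x : Completion R)) '' ((I * J : Ideal R) : Set R)
        ⊆ ((Ihat * Jhat : Ideal (Completion R)) : Set (Completion R)) := by
      rintro _ ⟨x, hx, rfl⟩
      have hxmap : (x : Completion R) ∈ Ideal.map (Completion.coeRingHom : R →+* Completion R)
          (I * J) := Ideal.mem_map_of_mem _ hx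
      have hle : Ideal.map (Completion.coeRingHom : R →+* Completion R) (I * J)
          ≤ Ihat * Jhat := by
        rw [Ideal.map_mul]
        exact Ideal.mul_mono (hIhat ▸ Submodule.le_topologicalClosure _)
          (hJhat ▸ Submodule.le_topologicalClosure _)
      exact hle hxmap
    exact himg.trans (closure_mono hsub2)
  -- the closure of Ihat*Jhat is the underlying set of an additive subgroup
  have hgrp : closure ((Ihat * Jhat : Ideal (Completion R)) : Set (Completion R))
      = (((Ihat * Jhat).topologicalClosure).toAddSubgroup : Set (Completion R)) := by
    rw [show ((((Ihat * Jhat).topologicalClosure).toAddSubgroup : AddSubgroup (Completion R)) : Set (Completion R)) = (((Ihat * Jhat).topologicalClosure : Submodule (Completion R) (Completion R)) : Set (Completion R)) from rfl, Submodule.topologicalClosure_coe]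
  rw [hgrp]
  exact AddSubgroup.isOpen_of_mem_nhds _ (by
    rw [← hgrp]; exact Filter.mem_of_superset h1 hsub)
end

section
/- Let φ : R → S be a clop-adic morphism of linearly topologized rings, i.e., for every open ideal I of R the closure of φ(I)S in S is open. If R is clop (the closure of the product of any two open ideals of R is open), then S is clop. -/
/-- Let `φ : R → S` be a clop-adic morphism of linearly topologized rings (for every open
ideal `I` of `R`, the closure of `φ(I)S` is open in `S`).  If `R` is clop (the closure of
the product of any two open ideals is open), then `S` is clop. -/
theorem clop_of_clopAdic {R S : Type*} [CommRing R] [CommRing S]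
    [TopologicalSpace R] [TopologicalSpace S] [IsTopologicalRing R] [IsTopologicalRing S]
    (hlinR : ∀ U ∈ nhds (0 : R), ∃ I : Ideal R, IsOpen (I : Set R) ∧ (I : Set R) ⊆ U)
    (hlinS : ∀ U ∈ nhds (0 : S), ∃ J : Ideal S, IsOpen (J : Set S) ∧ (J : Set S) ⊆ U)
    (φ : R →+* S) (hφ : Continuous φ)
    (hadic : ∀ I : Ideal R, IsOpen (I : Set R) →
      IsOpen (closure ((I.map φ : Ideal S) : Set S)))
    (hclopR : ∀ I J : Ideal R, IsOpen (I : Set R) → IsOpen (J : Set R) →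
      IsOpen (closure ((I * J : Ideal R) : Set R))) :
    ∀ I J : Ideal S, IsOpen (I : Set S) → IsOpen (J : Set S) →
      IsOpen (closure ((I * J : Ideal S) : Set S)) := by
  intro I J hI hJ
  -- preimages of I and J in R
  set A : Ideal R := I.comap φ with hA
  set B : Ideal R := J.comap φ with hB
  have hAopen : IsOpen (A : Set R) := hI.preimage hφ
  have hBopen : IsOpen (B : Set R) := hJ.preimage hφ
  -- K = closure of A*B, an open ideal of R
  set K : Ideal R := (A * B).topologicalClosure with hK
  have hKopen : IsOpen (K : Set R) := by
    simpa [hK, Submodule.topologicalClosure_coe] using hclopR A B hAopen hBopen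
  have hopen : IsOpen (closure ((K.map φ : Ideal S) : Set S)) := hadic K hKopen
  -- closure (I*J) as an ideal of S
  set L : Ideal S := (I * J).topologicalClosure with hL
  -- K.map φ ⊆ L
  have hsub : (K.map φ : Ideal S) ≤ L := by
    rw [Ideal.map_le_iff_le_comap]
    intro x hx
    have hmap : φ '' ((A * B : Ideal R) : Set R) ⊆ (L : Set S) := by
      rintro _ ⟨y, hy, rfl⟩
      have : φ y ∈ (I * J : Ideal S) := by
        have h1 : Ideal.map φ (A * B) ≤ I * J := by
          rw [Ideal.map_mul]
          exact Ideal.mul_mono (Ideal.map_comap_le) (Ideal.map_comap_le)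
        exact h1 (Ideal.mem_map_of_mem φ hy)
      exact subset_closure this
    have hLclosed : IsClosed (L : Set S) := isClosed_closure
    have : φ x ∈ closure (L : Set S) :=
      map_mem_closure hφ hx fun y hy => hmap ⟨y, hy, rfl⟩
    rwa [hLclosed.closure_eq] at this
  -- closure (K.map φ) ⊆ L since L is closed
  have hcl : closure ((K.map φ : Ideal S) : Set S) ⊆ (L : Set S) :=
    isClosed_closure.closure_subset_iff.mpr hsub
  -- L contains an open neighborhood of 0, so it is open
  have : IsOpen (L : Set S) := by
    refine AddSubgroup.isOpen_of_mem_nhds (g := 0) (L.toAddSubgroup) ?_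
    exact Filter.mem_of_superset (hopen.mem_nhds (by
      exact subset_closure (Submodule.zero_mem _))) hcl
  simpa [hL, Submodule.topologicalClosure_coe] using this
end

section
/- Let k be a linearly topologized ring with a countable basis of open ideals, complete and separated, and let M be a complete linearly topologized k-module with countable basis of open submodules that is clop (for every open ideal I of k and open submodule P of M, the closure of IP is open in M). Then M is barrelled: every closed k-submodule of M that is a sponge is open. -/
/-- Let `k` be a complete separated linearly topologized ring with a countable basis of
open ideals, and let `M` be a complete separated linearly topologized `k`-module with a
countable basis of open submodules which is bounded (uniform) and clop (for every open
ideal `I` of `k` and every open submodule `P` of `M`, the closure of `I•P` is open).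
Then `M` is barrelled: every closed `k`-submodule of `M` which is a sponge is open. -/
theorem barrelled_of_clop {k M : Type*} [CommRing k] [UniformSpace k] [IsUniformAddGroup k]
    [CompleteSpace k] [T2Space k]
    [AddCommGroup M] [Module k M] [UniformSpace M] [IsUniformAddGroup M]
    [CompleteSpace M] [T2Space M]
    (Bk : ℕ → Ideal k) (hBkopen : ∀ n, IsOpen ((Bk n : Set k)))
    (hBk : (nhds (0 : k)).HasBasis (fun _ : ℕ => True) fun n => ((Bk n : Set k)))
    (BM : ℕ → Submodule k M) (hBMopen : ∀ n, IsOpen ((BM n : Set M)))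
    (hBM : (nhds (0 : M)).HasBasis (fun _ : ℕ => True) fun n => ((BM n : Set M)))
    (hsmul : ∀ a : k, Continuous fun m : M => a • m)
    (hbound : ∀ N : Submodule k M, IsOpen (N : Set M) →
      ∃ I : Ideal k, IsOpen (I : Set k) ∧ ∀ a ∈ I, ∀ x : M, a • x ∈ N)
    (hclop : ∀ (I : Ideal k) (P : Submodule k M), IsOpen (I : Set k) →
      IsOpen (P : Set M) → IsOpen (closure ((I • P : Submodule k M) : Set M))) :
    ∀ N : Submodule k M, IsClosed (N : Set M) →
      (∀ m : M, ∃ I : Ideal k, IsOpen (I : Set k) ∧ ∀ a ∈ I, a • m ∈ N) →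
      IsOpen (N : Set M) := by
  intro N hNclosed hsponge
  -- M is a Baire space
  haveI : (nhds (0 : M)).IsCountablyGenerated := hBM.isCountablyGenerated
  haveI : (uniformity M).IsCountablyGenerated := by
    rw [uniformity_eq_comap_nhds_zero]; infer_instance
  letI : PseudoMetricSpace M := UniformSpace.pseudoMetricSpace M
  -- the submodules S n = {m | Bk n • m ⊆ N}
  let S : ℕ → Submodule k M := fun n =>
    { carrier := {m | ∀ a ∈ Bk n, a • m ∈ N}
      add_mem' := fun hx hy a ha => by
        rw [smul_add]; exact N.add_mem (hx a ha) (hy a ha)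
      zero_mem' := fun a ha => by rw [smul_zero]; exact N.zero_mem
      smul_mem' := fun c x hx a ha => by
        rw [smul_smul]; exact hx (a * c) (Ideal.mul_mem_right c _ ha) }
  have hSclosed : ∀ n, IsClosed ((S n : Set M)) := by
    intro n
    have : ((S n : Set M)) = ⋂ a ∈ Bk n, (fun m : M => a • m) ⁻¹' N := by
      ext m; simp [S, Set.mem_iInter]
    rw [this]
    exact isClosed_biInter fun a _ => hNclosed.preimage (hsmul a)
  have hcover : (⋃ n, (S n : Set M)) = Set.univ := by
    refine Set.eq_univ_of_forall fun m => ?_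
    obtain ⟨I, hIopen, hI⟩ := hsponge m
    obtain ⟨n, -, hn⟩ := hBk.mem_iff.mp (hIopen.mem_nhds I.zero_mem)
    exact Set.mem_iUnion.mpr ⟨n, fun a ha => hI a (hn ha)⟩
  obtain ⟨n, hn⟩ := nonempty_interior_of_iUnion_of_closed hSclosed hcover
  -- so S n is an open submodule
  have hSopen : IsOpen ((S n : Set M)) := by
    obtain ⟨x, hx⟩ := hn
    exact AddSubgroup.isOpen_of_mem_nhds (S n).toAddSubgroup
      (mem_interior_iff_mem_nhds.1 hx)
  -- Bk n • S n ≤ N, hence its closure is an open subset of N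
  have hle : (Bk n • S n : Submodule k M) ≤ N :=
    Submodule.smul_le.mpr fun a ha x hx => hx a ha
  have hsub : closure ((Bk n • S n : Submodule k M) : Set M) ⊆ N :=
    hNclosed.closure_subset_iff.mpr hle
  have hopen := hclop (Bk n) (S n) (hBkopen n) hSopen
  exact AddSubgroup.isOpen_of_mem_nhds N.toAddSubgroup
    (Filter.mem_of_superset (hopen.mem_nhds (subset_closure (Submodule.zero_mem _))) hsub)
end

section
/- Let k be a linearly topologized ring that is clop, and M a uniform (bounded, k-linearly topologized) k-module. Then M is clop (for every open ideal I and open submodule P, the closure of IP is open) if and only if M is pseudocanonical (the family {closure of IM : I open ideal of k} is a basis of open submodules of M). -/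
/-- Let `k` be a linearly topologized clop ring and `M` a uniform (bounded, `k`-linearly
topologized) `k`-module.  Then `M` is clop (for every open ideal `I` and every open
submodule `P`, the closure of `I•P` is open) if and only if `M` is pseudocanonical (the
family of closures of the submodules `I•M`, for `I` an open ideal of `k`, is a basis of
open submodules of `M`). -/
theorem clop_iff_pseudocanonical {k M : Type*} [CommRing k] [TopologicalSpace k]
    [IsTopologicalRing k] [AddCommGroup M] [Module k M] [TopologicalSpace M]
    [IsTopologicalAddGroup M]
    (hlink : ∀ U ∈ nhds (0 : k), ∃ I : Ideal k, IsOpen (I : Set k) ∧ (I : Set k) ⊆ U)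
    (hclopk : ∀ I J : Ideal k, IsOpen (I : Set k) → IsOpen (J : Set k) →
      IsOpen (closure ((I * J : Ideal k) : Set k)))
    (hlinM : ∀ U ∈ nhds (0 : M), ∃ N : Submodule k M, IsOpen (N : Set M) ∧ (N : Set M) ⊆ U)
    (hsmul : ∀ a : k, Continuous fun m : M => a • m)
    (hbound : ∀ N : Submodule k M, IsOpen (N : Set M) →
      ∃ I : Ideal k, IsOpen (I : Set k) ∧ ∀ a ∈ I, ∀ x : M, a • x ∈ N) :
    (∀ (I : Ideal k) (P : Submodule k M), IsOpen (I : Set k) → IsOpen (P : Set M) →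
        IsOpen (closure ((I • P : Submodule k M) : Set M))) ↔
      (∀ I : Ideal k, IsOpen (I : Set k) →
          IsOpen (closure ((I • (⊤ : Submodule k M) : Submodule k M) : Set M))) ∧
        ∀ U ∈ nhds (0 : M), ∃ I : Ideal k, IsOpen (I : Set k) ∧
          closure ((I • (⊤ : Submodule k M) : Submodule k M) : Set M) ⊆ U := by
  haveI : ContinuousConstSMul k M := ⟨hsmul⟩
  constructor
  · intro hclop
    refine ⟨fun I hI => ?_, fun U hU => ?_⟩
    · exact hclop I ⊤ hI (by simpa using isOpen_univ)
    · obtain ⟨N, hNopen, hNU⟩ := hlinM U hU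
      obtain ⟨I, hIopen, hIN⟩ := hbound N hNopen
      refine ⟨I, hIopen, ?_⟩
      have hle : (I • (⊤ : Submodule k M) : Submodule k M) ≤ N :=
        Submodule.smul_le.2 fun a ha m _ => hIN a ha m
      have hNclosed : IsClosed (N : Set M) :=
        N.toAddSubgroup.isClosed_of_isOpen hNopen
      calc closure ((I • (⊤ : Submodule k M) : Submodule k M) : Set M)
          ⊆ closure (N : Set M) := closure_mono hle
        _ = (N : Set M) := hNclosed.closure_eq
        _ ⊆ U := hNU
  · rintro ⟨hpc1, hpc2⟩ I P hI hP
    -- find open ideal J with closure (J • ⊤) ⊆ P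
    have hPnhds : (P : Set M) ∈ nhds (0 : M) := hP.mem_nhds P.zero_mem
    obtain ⟨J, hJopen, hJP⟩ := hpc2 (P : Set M) hPnhds
    -- (I * J) • ⊤ ≤ I • P
    have hIJ : ((I * J : Ideal k) • (⊤ : Submodule k M) : Submodule k M) ≤ I • P := by
      refine Submodule.smul_le.2 fun b hb m _ => ?_
      refine Submodule.mul_induction_on hb (fun x hx y hy => ?_) (fun b₁ b₂ h₁ h₂ => ?_)
      · rw [mul_smul]
        exact Submodule.smul_mem_smul hx
          (hJP (subset_closure (Submodule.smul_mem_smul hy trivial)))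
      · rw [add_smul]; exact Submodule.add_mem _ h₁ h₂
    -- the key claim: closure (I*J) • ⊤ lands in the closure of I • P
    have hkey : ∀ a ∈ (I * J : Ideal k).closure, ∀ m : M,
        a • m ∈ closure ((I • P : Submodule k M) : Set M) := by
      intro a ha m
      rw [mem_closure_iff_nhds]
      intro s hs
      -- pick an open submodule N with a•m + N ⊆ s
      have hs' : (fun x : M => a • m + x) ⁻¹' s ∈ nhds (0 : M) := by
        have := (continuous_add_left (a • m)).continuousAt (x := (0 : M))
        rw [ContinuousAt, add_zero] at this
        exact this hs
      obtain ⟨N, hNopen, hNs⟩ := hlinM _ hs'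
      obtain ⟨I₀, hI₀open, hI₀N⟩ := hbound N hNopen
      -- find b ∈ I*J with a - b ∈ I₀
      have hV : a ∈ {x : k | a - x ∈ (I₀ : Set k)} := by simp [I₀.zero_mem]
      have hVopen : IsOpen {x : k | a - x ∈ (I₀ : Set k)} :=
        hI₀open.preimage (continuous_const.sub continuous_id)
      have ha' : a ∈ closure ((I * J : Ideal k) : Set k) := by
        rwa [← Ideal.coe_closure]
      obtain ⟨b, hbV, hbIJ⟩ := mem_closure_iff_nhds.1 ha' _ (hVopen.mem_nhds hV)
      refine ⟨b • m, ?_, hIJ (Submodule.smul_mem_smul hbIJ trivial)⟩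
      have : b • m = a • m + (-((a - b) • m)) := by
        rw [sub_smul]; abel
      rw [this]
      exact hNs (N.neg_mem (hI₀N _ hbV m))
    -- closure (I*J) is an open ideal, so closure (closure(I*J) • ⊤) is open
    have hKopen : IsOpen (((I * J : Ideal k).closure : Ideal k) : Set k) := by
      rw [Ideal.coe_closure]; exact hclopk I J hI hJopen
    have hKtop := hpc1 _ hKopen
    -- closure (I•P) as a submodule
    have hle : (((I * J : Ideal k).closure • (⊤ : Submodule k M) : Submodule k M) : Set M)
        ⊆ ((I • P : Submodule k M).topologicalClosure : Set M) := by
      intro x hx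
      have : (I * J : Ideal k).closure • (⊤ : Submodule k M) ≤
          (I • P : Submodule k M).topologicalClosure := by
        refine Submodule.smul_le.2 fun a ha m _ => ?_
        exact hkey a ha m
      exact this hx
    have hsub : closure (((I * J : Ideal k).closure • (⊤ : Submodule k M) :
        Submodule k M) : Set M) ⊆ closure ((I • P : Submodule k M) : Set M) := by
      have := closure_mono hle
      rwa [Submodule.topologicalClosure_coe, closure_closure] at this
    -- conclude: closure (I•P) is a subgroup with nonempty interior
    have hmem : closure ((I • P : Submodule k M) : Set M) ∈ nhds (0 : M) :=
      Filter.mem_of_superset (hKtop.mem_nhds (subset_closure (Submodule.zero_mem _))) hsub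
    exact AddSubgroup.isOpen_of_mem_nhds
      (I • P : Submodule k M).topologicalClosure.toAddSubgroup
      (by rwa [Submodule.coe_toAddSubgroup, Submodule.topologicalClosure_coe])
end

section
/- Let {M_α}_{α∈A} be a family of separated non-archimedean topological abelian groups. Then the algebraic direct sum ⊕_α M_α is a closed subgroup of the box product ∏^□_α M_α (the product group with the topology generated by products ∏_α U_α of open subgroups U_α ⊆ M_α). In particular, if all M_α are complete then ⊕_α M_α with the subspace topology is complete. -/
/-- The box topology on a product of non-archimedean topological abelian groups: a basis
of neighborhoods of a point `x` is given by the sets `x + ∏ U a` for arbitrary choices of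
open subgroups `U a`. -/
def boxTopology (A : Type*) (M : A → Type*) [∀ a, AddCommGroup (M a)]
    [∀ a, TopologicalSpace (M a)] : TopologicalSpace (∀ a, M a) where
  IsOpen s := ∀ x ∈ s, ∃ U : ∀ a, AddSubgroup (M a),
    (∀ a, IsOpen ((U a : Set (M a)))) ∧ {y | ∀ a, y a - x a ∈ U a} ⊆ s
  isOpen_univ := fun x _ =>
    ⟨fun _ => ⊤, fun a => by simp only [AddSubgroup.coe_top]; exact (isOpen_univ : IsOpen (Set.univ : Set (M a))),
      fun y _ => trivial⟩
  isOpen_inter := fun s t hs ht x hx => by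
    obtain ⟨U, hUo, hU⟩ := hs x hx.1
    obtain ⟨V, hVo, hV⟩ := ht x hx.2
    refine ⟨fun a => U a ⊓ V a, fun a => ?_, fun y hy => ?_⟩
    · rw [AddSubgroup.coe_inf]
      exact (hUo a).inter (hVo a)
    · exact ⟨hU fun a => (AddSubgroup.mem_inf.mp (hy a)).1,
        hV fun a => (AddSubgroup.mem_inf.mp (hy a)).2⟩
  isOpen_sUnion := fun S hS x hx => by
    obtain ⟨s, hsS, hxs⟩ := hx
    obtain ⟨U, hUo, hU⟩ := hS s hsS x hxs
    exact ⟨U, hUo, hU.trans (Set.subset_sUnion_of_mem hsS)⟩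


/-- In a T1 nonarchimedean additive group, any nonzero element avoids some open subgroup. -/
lemma exists_openAddSubgroup_not_mem {G : Type*} [AddGroup G] [TopologicalSpace G]
    [IsTopologicalAddGroup G] [NonarchimedeanAddGroup G] [T1Space G] {x : G} (hx : x ≠ 0) :
    ∃ U : OpenAddSubgroup G, x ∉ U := by
  have h0 : ({x}ᶜ : Set G) ∈ nhds (0 : G) :=
    (isOpen_compl_singleton).mem_nhds (by simpa using (Ne.symm hx))
  obtain ⟨V, hV⟩ := NonarchimedeanAddGroup.is_nonarchimedean _ h0
  exact ⟨V, fun h => (hV h) rfl⟩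

/-- Let `{M a}` be a family of separated non-archimedean topological abelian groups.
Then the algebraic direct sum (the families with finite support) is a closed subgroup of
the box product.  In particular, if all `M a` are complete, then the direct sum with the
subspace topology is complete: every Cauchy filter (for the canonical box uniformity)
supported on the direct sum converges to a point of the direct sum. -/
theorem directSum_isClosed_in_boxProduct {A : Type*} (M : A → Type*)
    [∀ a, AddCommGroup (M a)] [∀ a, UniformSpace (M a)] [∀ a, IsUniformAddGroup (M a)]
    [∀ a, NonarchimedeanAddGroup (M a)] [∀ a, T2Space (M a)] :
    @IsClosed _ (boxTopology A M) {x : (∀ a, M a) | {a | x a ≠ 0}.Finite} ∧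
      ((∀ a, CompleteSpace (M a)) →
        ∀ F : Filter (∀ a, M a), F.NeBot →
          {x : (∀ a, M a) | {a | x a ≠ 0}.Finite} ∈ F →
          (∀ U : ∀ a, OpenAddSubgroup (M a),
            ∃ t ∈ F, ∀ y : (∀ a, M a), y ∈ t → ∀ z : (∀ a, M a), z ∈ t → ∀ a, y a - z a ∈ U a) →
          ∃ x : (∀ a, M a), {a | x a ≠ 0}.Finite ∧
            F ≤ @nhds _ (boxTopology A M) x) := by
  classical
  have avoid : ∀ (x : ∀ a, M a), ∃ U : ∀ a, OpenAddSubgroup (M a),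
      ∀ a, x a ≠ 0 → x a ∉ U a := by
    intro x
    have : ∀ a, ∃ U : OpenAddSubgroup (M a), x a ≠ 0 → x a ∉ U := by
      intro a
      by_cases h : x a ≠ 0
      · obtain ⟨U, hU⟩ := exists_openAddSubgroup_not_mem h
        exact ⟨U, fun _ => hU⟩
      · exact ⟨⊤, fun h' => absurd h' h⟩
    choose U hU using this
    exact ⟨U, hU⟩
  constructor
  · refine @IsClosed.mk _ (boxTopology A M) _ ?_
    intro x hx
    obtain ⟨U, hU⟩ := avoid x
    refine ⟨fun a => (U a).toAddSubgroup, fun a => (U a).isOpen, fun y hy => ?_⟩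
    intro hfin
    refine hx ?_
    refine hfin.subset ?_
    intro a ha
    simp only [Set.mem_setOf_eq] at ha ⊢
    intro hy0
    refine hU a ha ?_
    have := hy a
    rw [hy0, zero_sub] at this
    have h2 : -(x a) ∈ U a := this
    simpa using neg_mem h2
  · intro hcomp F hne hs hC
    have key : ∀ a : A, ∃ xa : M a, Filter.Tendsto (fun f => f a) F (nhds xa) := by
      intro a
      have := hcomp a
      have hcau : Cauchy (F.map (fun f => f a)) := by
        refine ⟨hne.map _, ?_⟩
        rw [uniformity_eq_comap_nhds_zero]
        intro V hV
        rw [Filter.mem_comap] at hV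
        obtain ⟨W, hW, hWV⟩ := hV
        obtain ⟨S, hS⟩ := NonarchimedeanAddGroup.is_nonarchimedean _ hW
        obtain ⟨t, htF, ht⟩ := hC (Function.update (fun b => (⊤ : OpenAddSubgroup (M b))) a S)
        rw [Filter.mem_prod_iff]
        refine ⟨(fun f => f a) '' t, Filter.image_mem_map htF,
          (fun f => f a) '' t, Filter.image_mem_map htF, ?_⟩
        rintro ⟨p, q⟩ ⟨⟨y, hy, rfl⟩, ⟨z, hz, rfl⟩⟩
        apply hWV
        have := ht z hz y hy a
        rw [Function.update_self] at this
        exact hS this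
      obtain ⟨xa, hxa⟩ := CompleteSpace.complete hcau
      exact ⟨xa, hxa⟩
    choose x hx using key
    have claim2 : ∀ U : ∀ a, OpenAddSubgroup (M a), ∃ t ∈ F,
        ∀ z ∈ t, ∀ a, z a - x a ∈ U a := by
      intro U
      obtain ⟨t, htF, ht⟩ := hC U
      obtain ⟨w, hw⟩ := Filter.nonempty_of_mem htF
      have hxw : ∀ a, x a - w a ∈ U a := by
        intro a
        have hclosed : IsClosed {v : M a | v - w a ∈ (U a : Set (M a))} :=
          (U a).isClosed.preimage (continuous_id.sub continuous_const)
        have hmem : x a ∈ closure ((fun f => f a) '' t) :=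
          mem_closure_of_tendsto (hx a) (Filter.mem_of_superset htF
            (fun y hy => Set.mem_image_of_mem _ hy))
        have hsub : closure ((fun f => f a) '' t) ⊆ {v : M a | v - w a ∈ (U a : Set (M a))} := by
          apply closure_minimal _ hclosed
          rintro _ ⟨y, hy, rfl⟩
          exact ht y hy w hw a
        exact hsub hmem
      refine ⟨t, htF, fun z hz a => ?_⟩
      have h1 := ht z hz w hw a
      have h2 := hxw a
      have : (z a - w a) - (x a - w a) ∈ U a := sub_mem h1 h2
      simpa [sub_sub_sub_cancel_right] using this
    refine ⟨x, ?_, ?_⟩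
    · by_contra hinf
      have hinf : Set.Infinite {a | x a ≠ 0} := hinf
      obtain ⟨U, hU⟩ := avoid x
      obtain ⟨t, htF, ht⟩ := claim2 U
      obtain ⟨y, hyt, hys⟩ := Filter.nonempty_of_mem (Filter.inter_mem htF hs)
      obtain ⟨a, ha⟩ := (hinf.diff hys).nonempty
      have hxa : x a ≠ 0 := ha.1
      have hya : y a = 0 := by
        by_contra h
        exact ha.2 h
      refine hU a hxa ?_
      have := ht y hyt a
      rw [hya, zero_sub] at this
      simpa using (neg_mem this : -(-(x a)) ∈ U a)
    · rw [@le_nhds_iff _ (boxTopology A M)]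
      intro s' hxs' hso
      obtain ⟨U, hUo, hUsub⟩ := hso x hxs'
      obtain ⟨t, htF, ht⟩ := claim2 (fun a => ⟨U a, hUo a⟩)
      exact Filter.mem_of_superset htF (fun z hz => hUsub (fun a => ht z hz a))
end

section
/- Let k be a complete linearly topologized ring with countable basis of open ideals, and M a complete linearly topologized uniform k-module with countable basis of open submodules. For any open ideal I of k, the canonical map M/cl(IM) → M ⊗̂ᵤ_k (k/I) is an isomorphism, where M ⊗̂ᵤ_k (k/I) is the completed uniform tensor product (the limit over open submodules P of M and open submodules of k/I of the discrete tensor products). -/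
set_option maxHeartbeats 1000000

open TensorProduct

/-- The completed tensor product `M ⊗̂ᵤ_k (k/I)`, realized as the limit, over the open
submodules `P` of `M`, of the discrete tensor products `(M/P) ⊗ (k/I)` (for `k/I`
discrete the open submodule `0 ⊆ k/I` is cofinal), as the submodule of compatible
families in the product. -/
noncomputable def tensorQuotLimit {k M : Type*} [CommRing k] [AddCommGroup M] [Module k M]
    [TopologicalSpace M] (I : Ideal k) :
    Submodule k (∀ P : {P : Submodule k M // IsOpen (P : Set M)},
      TensorProduct k (M ⧸ P.1) (k ⧸ I)) where
  carrier := {x | ∀ (P P' : {P : Submodule k M // IsOpen (P : Set M)}) (h : P'.1 ≤ P.1),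
    TensorProduct.map (Submodule.mapQ P'.1 P.1 LinearMap.id (by simpa using h))
      LinearMap.id (x P') = x P}
  add_mem' := fun hx hy P P' h => by simp [map_add, hx P P' h, hy P P' h]
  zero_mem' := fun P P' h => by simp
  smul_mem' := fun c x hx P P' h => by simp [map_smul, hx P P' h]

section Aux

variable {k M : Type*} [CommRing k] [AddCommGroup M] [Module k M]

/-- The canonical map `M → (M/P) ⊗ (k/I)`. -/
noncomputable def gmap (P : Submodule k M) (I : Ideal k) :
    M →ₗ[k] TensorProduct k (M ⧸ P) (k ⧸ I) :=
  ((TensorProduct.mk k (M ⧸ P) (k ⧸ I)).flip (Submodule.Quotient.mk 1)) ∘ₗ P.mkQ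

lemma gmap_apply (P : Submodule k M) (I : Ideal k) (m : M) :
    gmap P I m = (Submodule.Quotient.mk m : M ⧸ P) ⊗ₜ[k]
      (Submodule.Quotient.mk (1 : k) : k ⧸ I) := rfl

lemma equiv_gmap (P : Submodule k M) (I : Ideal k) (m : M) :
    TensorProduct.tensorQuotEquivQuotSMul (M ⧸ P) I (gmap P I m) =
      Submodule.Quotient.mk (Submodule.Quotient.mk m) := by
  rw [gmap_apply]
  have h1 : (Submodule.Quotient.mk (1 : k) : k ⧸ I) = Ideal.Quotient.mk I 1 := rfl
  rw [h1, TensorProduct.tensorQuotEquivQuotSMul_tmul_mk, one_smul]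

lemma gmap_ker (P : Submodule k M) (I : Ideal k) :
    LinearMap.ker (gmap P I) = P ⊔ I • (⊤ : Submodule k M) := by
  have hmap : (I • (⊤ : Submodule k (M ⧸ P))) =
      Submodule.map P.mkQ (I • (⊤ : Submodule k M)) := by
    rw [Submodule.map_smul'', Submodule.map_top, Submodule.range_mkQ]
  ext m
  simp only [LinearMap.mem_ker]
  rw [← LinearEquiv.map_eq_zero_iff (TensorProduct.tensorQuotEquivQuotSMul (M ⧸ P) I),
    equiv_gmap, Submodule.Quotient.mk_eq_zero, hmap,
    show ((Submodule.Quotient.mk m : M ⧸ P) ∈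
        Submodule.map P.mkQ (I • (⊤ : Submodule k M))) ↔
      m ∈ Submodule.comap P.mkQ (Submodule.map P.mkQ (I • (⊤ : Submodule k M))) from Iff.rfl,
    Submodule.comap_map_eq, Submodule.ker_mkQ, sup_comm]

lemma gmap_eq_zero_iff (P : Submodule k M) (I : Ideal k) (m : M) :
    gmap P I m = 0 ↔ m ∈ P ⊔ I • (⊤ : Submodule k M) := by
  rw [← LinearMap.mem_ker, gmap_ker]

lemma gmap_surjective (P : Submodule k M) (I : Ideal k) :
    Function.Surjective (gmap P I) := by
  intro x
  obtain ⟨z, hz⟩ := Submodule.Quotient.mk_surjective _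
    (TensorProduct.tensorQuotEquivQuotSMul (M ⧸ P) I x)
  obtain ⟨m, rfl⟩ := Submodule.Quotient.mk_surjective P z
  exact ⟨m, (TensorProduct.tensorQuotEquivQuotSMul (M ⧸ P) I).injective
    (by rw [equiv_gmap, hz])⟩

lemma gmap_compat {P P' : Submodule k M} (I : Ideal k) (h : P' ≤ P) (m : M) :
    TensorProduct.map (Submodule.mapQ P' P LinearMap.id (by simpa using h)) LinearMap.id
      (gmap P' I m) = gmap P I m := by
  simp [gmap_apply, TensorProduct.map_tmul, Submodule.mapQ_apply]

end Aux

/-- Let `k` be a complete linearly topologized ring with a countable basis of open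
ideals, and `M` a complete linearly topologized uniform `k`-module with a countable basis
of open submodules.  For any open ideal `I` of `k`, the canonical map
`M/cl(I·M) → M ⊗̂ᵤ_k (k/I)` is an isomorphism of topological `k`-modules, where the
completed tensor product is the limit of the discrete tensor products `(M/P) ⊗ (k/I)`. -/
theorem quotient_closure_smul_iso_completedTensor {k M : Type*} [CommRing k]
    [UniformSpace k] [IsUniformAddGroup k] [CompleteSpace k]
    [AddCommGroup M] [Module k M] [UniformSpace M] [IsUniformAddGroup M] [CompleteSpace M]
    (Bk : ℕ → Ideal k) (hBkopen : ∀ n, IsOpen ((Bk n : Set k)))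
    (hBk : (nhds (0 : k)).HasBasis (fun _ : ℕ => True) fun n => ((Bk n : Set k)))
    (BM : ℕ → Submodule k M) (hBMopen : ∀ n, IsOpen ((BM n : Set M)))
    (hBM : (nhds (0 : M)).HasBasis (fun _ : ℕ => True) fun n => ((BM n : Set M)))
    (hsmul : ∀ a : k, Continuous fun m : M => a • m)
    (hbound : ∀ N : Submodule k M, IsOpen (N : Set M) →
      ∃ J : Ideal k, IsOpen (J : Set k) ∧ ∀ a ∈ J, ∀ x : M, a • x ∈ N)
    (I : Ideal k) (hI : IsOpen (I : Set k))
    (C : Submodule k M)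
    (hC : (C : Set M) =
      closure ((I • (⊤ : Submodule k M) : Submodule k M) : Set M)) :
    letI : ∀ P : {P : Submodule k M // IsOpen (P : Set M)},
        TopologicalSpace (TensorProduct k (M ⧸ P.1) (k ⧸ I)) := fun _ => ⊥
    ∃ e : (M ⧸ C) ≃ₗ[k] tensorQuotLimit (M := M) I,
      Continuous e ∧ Continuous e.symm ∧
        ∀ (m : M) (P : {P : Submodule k M // IsOpen (P : Set M)}),
          ((e (Submodule.Quotient.mk m) :
              ∀ P : {P : Submodule k M // IsOpen (P : Set M)},
                TensorProduct k (M ⧸ P.1) (k ⧸ I)) P) =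
            (Submodule.Quotient.mk m : M ⧸ P.1) ⊗ₜ[k]
              (Submodule.Quotient.mk (1 : k) : k ⧸ I) := by
  classical
  letI tinst : ∀ P : {P : Submodule k M // IsOpen (P : Set M)},
      TopologicalSpace (TensorProduct k (M ⧸ P.1) (k ⧸ I)) := fun _ => ⊥
  haveI dinst : ∀ P : {P : Submodule k M // IsOpen (P : Set M)},
      DiscreteTopology (TensorProduct k (M ⧸ P.1) (k ⧸ I)) := fun _ => ⟨rfl⟩
  set S : Submodule k M := I • (⊤ : Submodule k M) with hS
  -- translated neighborhoods
  have nhd_sub : ∀ (P : Submodule k M), IsOpen (P : Set M) → ∀ m : M,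
      {x : M | x - m ∈ P} ∈ nhds m := by
    intro P hP m
    have hc : Continuous fun x : M => x - m := continuous_id.sub continuous_const
    have hop : IsOpen {x : M | x - m ∈ P} := hP.preimage hc
    exact hop.mem_nhds (by simp)
  -- I • ⊤ ≤ C
  have hIC : S ≤ C := by
    intro x hx
    show x ∈ (C : Set M)
    rw [hC]
    exact subset_closure hx
  -- membership in C iff in all P ⊔ S
  have hCmem : ∀ m : M, m ∈ C ↔
      ∀ P : {P : Submodule k M // IsOpen (P : Set M)}, m ∈ P.1 ⊔ S := by
    intro m
    constructor
    · intro hm P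
      have hm' : m ∈ closure (S : Set M) := by rw [← hC]; exact hm
      obtain ⟨y, hy1, hy2⟩ := mem_closure_iff_nhds.mp hm' _ (nhd_sub P.1 P.2 m)
      -- y ∈ {x | x - m ∈ P} and y ∈ S
      refine Submodule.mem_sup.mpr ⟨m - y, ?_, y, hy2, by abel⟩
      have := P.1.neg_mem hy1
      simpa [neg_sub] using this
    · intro h
      show m ∈ (C : Set M)
      rw [hC]
      have hbasis : (nhds m).HasBasis (fun _ : ℕ => True)
          (fun n => (fun x : M => x - m) ⁻¹' (BM n : Set M)) := by
        have := hBM.comap (fun x : M => x - m)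
        rwa [nhds_translation_sub] at this
      rw [mem_closure_iff_nhds_basis hbasis]
      intro n _
      obtain ⟨b, hb, s, hs, hbs⟩ := Submodule.mem_sup.mp (h ⟨BM n, hBMopen n⟩)
      exact ⟨s, hs, by simpa using (by rw [← hbs]; simpa using (BM n).neg_mem hb : s - m ∈ BM n)⟩
  -- the map into the product
  set phi0 : M →ₗ[k] (∀ P : {P : Submodule k M // IsOpen (P : Set M)},
      TensorProduct k (M ⧸ P.1) (k ⧸ I)) := LinearMap.pi (fun P => gmap P.1 I) with hphi0
  have hmem : ∀ m : M, phi0 m ∈ tensorQuotLimit (M := M) I := by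
    intro m P P' h
    exact gmap_compat I h m
  set phi : M →ₗ[k] tensorQuotLimit (M := M) I :=
    LinearMap.codRestrict _ phi0 hmem with hphi
  have hphiP : ∀ (m : M) (P : {P : Submodule k M // IsOpen (P : Set M)}),
      ((phi m : ∀ P : {P : Submodule k M // IsOpen (P : Set M)},
        TensorProduct k (M ⧸ P.1) (k ⧸ I)) P) = gmap P.1 I m := fun m P => rfl
  -- kernel of phi is C
  have hker : LinearMap.ker phi = C := by
    ext m
    rw [LinearMap.mem_ker, hCmem]
    constructor
    · intro h P
      have : gmap P.1 I m = 0 := by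
        have := congrArg (fun y : tensorQuotLimit (M := M) I =>
          (y : ∀ P : {P : Submodule k M // IsOpen (P : Set M)},
            TensorProduct k (M ⧸ P.1) (k ⧸ I)) P) h
        simpa [hphiP] using this
      rwa [gmap_eq_zero_iff] at this
    · intro h
      apply Subtype.ext
      funext P
      have : gmap P.1 I m = 0 := (gmap_eq_zero_iff _ _ _).mpr (h P)
      simpa [hphiP] using this
  -- the decreasing cofinal sequence of open submodules
  set Q : ℕ → Submodule k M :=
    fun n => Nat.rec (BM 0) (fun n Qn => Qn ⊓ BM (n + 1)) n with hQ
  have hQsucc : ∀ n, Q (n + 1) = Q n ⊓ BM (n + 1) := fun n => rfl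
  have hQopen : ∀ n, IsOpen ((Q n : Set M)) := by
    intro n
    induction n with
    | zero => exact hBMopen 0
    | succ n ih =>
      rw [hQsucc]
      exact ih.inter (hBMopen (n + 1))
  have hQanti : ∀ {a b : ℕ}, a ≤ b → Q b ≤ Q a := by
    have : ∀ n, Q (n + 1) ≤ Q n := fun n => by rw [hQsucc]; exact inf_le_left
    intro a b h
    exact antitone_nat_of_succ_le this h
  have hQBM : ∀ n, Q n ≤ BM n := by
    intro n
    cases n with
    | zero => exact le_rfl
    | succ n => rw [hQsucc]; exact inf_le_right
  have hQbasis : ∀ U ∈ nhds (0 : M), ∃ n, (Q n : Set M) ⊆ U := by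
    intro U hU
    obtain ⟨n, -, hn⟩ := hBM.mem_iff.mp hU
    exact ⟨n, fun x hx => hn (hQBM n hx)⟩
  -- surjectivity of phi
  have hsurj : Function.Surjective phi := by
    intro x
    set PQ : ℕ → {P : Submodule k M // IsOpen (P : Set M)} :=
      fun n => ⟨Q n, hQopen n⟩ with hPQ
    choose m0 hm0 using fun n => gmap_surjective (Q n) I
      ((x : ∀ P : {P : Submodule k M // IsOpen (P : Set M)},
        TensorProduct k (M ⧸ P.1) (k ⧸ I)) (PQ n))
    have hcompat : ∀ n, m0 (n + 1) - m0 n ∈ Q n ⊔ S := by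
      intro n
      rw [← gmap_eq_zero_iff, map_sub, hm0 n]
      have hx := x.2 (PQ n) (PQ (n + 1)) (hQanti (Nat.le_succ n))
      rw [← hx, ← hm0 (n + 1), gmap_compat I (hQanti (Nat.le_succ n)) (m0 (n + 1)), sub_self]
    choose p hp s hs hps using fun n => Submodule.mem_sup.mp (hcompat n)
    set m' : ℕ → M := fun n => m0 n - ∑ i ∈ Finset.range n, s i with hm'
    have hm'step : ∀ n, m' (n + 1) - m' n = p n := by
      intro n
      have h1 : m' (n + 1) - m' n = (m0 (n + 1) - m0 n) - s n := by
        simp only [hm', Finset.sum_range_succ]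
        abel
      rw [h1, ← hps n]
      abel
    have hm'diff : ∀ i j, i ≤ j → m' j - m' i ∈ Q i := by
      intro i j h
      induction j, h using Nat.le_induction with
      | base => simp
      | succ j hij ih =>
        have : m' (j + 1) - m' i = (m' (j + 1) - m' j) + (m' j - m' i) := by abel
        rw [this, hm'step j]
        exact (Q i).add_mem (hQanti hij (hp j)) ih
    have hcauchy : CauchySeq m' := by
      apply cauchySeq_of_controlled (fun n => {q : M × M | q.2 - q.1 ∈ Q n})
      · intro sV hV
        rw [uniformity_eq_comap_nhds_zero M] at hV
        obtain ⟨t, ht, hts⟩ := hV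
        obtain ⟨n, hn⟩ := hQbasis t ht
        exact ⟨n, fun q hq => hts (hn hq)⟩
      · intro N i j hi hj
        rcases le_total i j with h | h
        · exact hQanti hi (hm'diff i j h)
        · have := hQanti hj (hm'diff j i h)
          simpa using (Q N).neg_mem this
    obtain ⟨mlim, hmlim⟩ := cauchySeq_tendsto_of_complete hcauchy
    have hclosed : ∀ n, IsClosed ((Q n : Set M)) :=
      fun n => (Q n).toAddSubgroup.isClosed_of_isOpen (hQopen n)
    have hlim_mem : ∀ n, mlim - m' n ∈ Q n := by
      intro n
      have ht : Filter.Tendsto (fun j => m' j - m' n) Filter.atTop (nhds (mlim - m' n)) :=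
        hmlim.sub_const _
      refine (hclosed n).mem_of_tendsto ht ?_
      filter_upwards [Filter.eventually_ge_atTop n] with j hj using hm'diff n j hj
    have hkey : ∀ n, gmap (Q n) I mlim =
        ((x : ∀ P : {P : Submodule k M // IsOpen (P : Set M)},
          TensorProduct k (M ⧸ P.1) (k ⧸ I)) (PQ n)) := by
      intro n
      have hdiff : mlim - m0 n ∈ Q n ⊔ S := by
        have h1 : mlim - m' n ∈ Q n := hlim_mem n
        have h2 : (∑ i ∈ Finset.range n, s i) ∈ S :=
          Submodule.sum_mem _ fun i _ => hs i
        have h3 : mlim - m0 n = (mlim - m' n) - ∑ i ∈ Finset.range n, s i := by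
          simp only [hm']
          abel
        rw [h3]
        exact Submodule.sub_mem _ (Submodule.mem_sup_left h1) (Submodule.mem_sup_right h2)
      have h0 : gmap (Q n) I (mlim - m0 n) = 0 := (gmap_eq_zero_iff _ _ _).mpr hdiff
      rw [map_sub, sub_eq_zero] at h0
      rw [h0, hm0 n]
    refine ⟨mlim, Subtype.ext (funext fun P => ?_)⟩
    obtain ⟨n, hn⟩ := hQbasis P.1 (P.2.mem_nhds (zero_mem _))
    have hle : Q n ≤ P.1 := fun y hy => hn hy
    have hx := x.2 P (PQ n) hle
    rw [hphiP mlim P, ← hx, ← hkey n, gmap_compat I hle mlim]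
  -- the linear equivalence
  set f : (M ⧸ C) →ₗ[k] tensorQuotLimit (M := M) I :=
    C.liftQ (M₂ := tensorQuotLimit (M := M) I) phi hker.ge with hf
  have hfmk : ∀ m : M, f (Submodule.Quotient.mk m) = phi m := fun m => rfl
  have hfsurj : Function.Surjective f := by
    intro x
    obtain ⟨m, hm⟩ := hsurj x
    exact ⟨Submodule.Quotient.mk m, by rw [hfmk, hm]⟩
  have hfinj : Function.Injective f := by
    intro a b hab
    obtain ⟨ma, rfl⟩ := Submodule.Quotient.mk_surjective C a
    obtain ⟨mb, rfl⟩ := Submodule.Quotient.mk_surjective C b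
    rw [hfmk, hfmk] at hab
    rw [Submodule.Quotient.eq, ← hker, LinearMap.mem_ker, map_sub, hab, sub_self]
  set e : (M ⧸ C) ≃ₗ[k] tensorQuotLimit (M := M) I :=
    LinearEquiv.ofBijective f ⟨hfinj, hfsurj⟩ with he
  have hemk : ∀ m : M, e (Submodule.Quotient.mk m) = phi m := fun m => rfl
  refine ⟨e, ?_, ?_, ?_⟩
  · -- continuity of e
    have hcomp : Continuous (⇑e ∘ ⇑C.mkQ) := by
      have heq : ⇑e ∘ ⇑C.mkQ = ⇑phi := by
        funext m
        exact hemk m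
      rw [heq]
      apply Continuous.subtype_mk
      apply continuous_pi
      intro P
      show Continuous fun m : M => gmap P.1 I m
      rw [continuous_discrete_rng]
      intro y
      rw [isOpen_iff_mem_nhds]
      intro m hm
      simp only [Set.mem_preimage, Set.mem_singleton_iff] at hm
      refine Filter.mem_of_superset (nhd_sub P.1 P.2 m) ?_
      intro z hz
      simp only [Set.mem_preimage, Set.mem_singleton_iff]
      have h0 : gmap P.1 I (z - m) = 0 :=
        (gmap_eq_zero_iff _ _ _).mpr (Submodule.mem_sup_left hz)
      rw [map_sub, sub_eq_zero] at h0
      rw [h0, hm]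
    exact (C.isOpenQuotientMap_mkQ.isQuotientMap.continuous_iff).mpr hcomp
  · -- continuity of e.symm
    rw [continuous_def]
    intro U hU
    rw [isOpen_iff_mem_nhds]
    intro x hx
    simp only [Set.mem_preimage] at hx
    obtain ⟨mx, hmx⟩ := Submodule.Quotient.mk_surjective C (e.symm x)
    have hUopen : IsOpen ((⇑C.mkQ) ⁻¹' U) := hU.preimage C.isOpenQuotientMap_mkQ.continuous
    have hmxU : mx ∈ (⇑C.mkQ) ⁻¹' U := by
      show C.mkQ mx ∈ U
      have : C.mkQ mx = e.symm x := hmx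
      rw [this]
      exact hx
    have hV : (fun b : M => mx + b) ⁻¹' ((⇑C.mkQ) ⁻¹' U) ∈ nhds (0 : M) := by
      have hca : ContinuousAt (fun b : M => mx + b) 0 :=
        (continuous_const.add continuous_id).continuousAt
      have := hca.preimage_mem_nhds (by
        rw [show mx + 0 = mx by simp]
        exact hUopen.mem_nhds hmxU)
      exact this
    obtain ⟨n, -, hn⟩ := hBM.mem_iff.mp hV
    set Pn : {P : Submodule k M // IsOpen (P : Set M)} := ⟨BM n, hBMopen n⟩ with hPn
    have hWopen : IsOpen ((fun y : tensorQuotLimit (M := M) I =>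
        (y : ∀ P : {P : Submodule k M // IsOpen (P : Set M)},
          TensorProduct k (M ⧸ P.1) (k ⧸ I)) Pn) ⁻¹'
        {(x : ∀ P : {P : Submodule k M // IsOpen (P : Set M)},
          TensorProduct k (M ⧸ P.1) (k ⧸ I)) Pn}) := by
      have hcont : Continuous fun y : tensorQuotLimit (M := M) I =>
          (y : ∀ P : {P : Submodule k M // IsOpen (P : Set M)},
            TensorProduct k (M ⧸ P.1) (k ⧸ I)) Pn :=
        (continuous_apply Pn).comp continuous_subtype_val
      exact IsOpen.preimage hcont (isOpen_discrete _)
    refine Filter.mem_of_superset (hWopen.mem_nhds rfl) ?_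
    intro y hy
    simp only [Set.mem_preimage, Set.mem_singleton_iff] at hy
    show e.symm y ∈ U
    obtain ⟨my, hmy⟩ := Submodule.Quotient.mk_surjective C (e.symm y)
    have h1 : ∀ (z : tensorQuotLimit (M := M) I) (mz : M),
        Submodule.Quotient.mk mz = e.symm z → gmap (BM n) I mz =
          (z : ∀ P : {P : Submodule k M // IsOpen (P : Set M)},
            TensorProduct k (M ⧸ P.1) (k ⧸ I)) Pn := by
      intro z mz hz
      have hez : phi mz = z := by
        rw [← hemk mz, hz, e.apply_symm_apply]
      rw [← hez]
      exact hphiP mz Pn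
    have h2a : gmap (BM n) I my = gmap (BM n) I mx := by
      rw [h1 y my hmy, h1 x mx hmx, hy]
    have h2 : gmap (BM n) I (my - mx) = 0 := by
      rw [map_sub, h2a, sub_self]
    have h3 : my - mx ∈ BM n ⊔ S := (gmap_eq_zero_iff _ _ _).mp h2
    obtain ⟨b, hb, t, ht, hbt⟩ := Submodule.mem_sup.mp h3
    have h4 : e.symm y = C.mkQ (mx + b) := by
      rw [← hmy]
      show Submodule.Quotient.mk my = Submodule.Quotient.mk (mx + b)
      rw [Submodule.Quotient.eq]
      have : my - (mx + b) = t := by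
        have h5 : my - (mx + b) = (my - mx) - b := by abel
        rw [h5, ← hbt]
        abel
      rw [this]
      exact hIC ht
    rw [h4]
    exact hn hb
  · intro m P
    rw [hemk m, hphiP m P, gmap_apply]
end
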